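/- arXiv:1202.0019 — 3 statements merged into one kernel-verified Lean document; each statement's English description precedes it below -/
import Mathlib

section
/- Let V be a reflexive Banach space and A:V→V* an operator satisfying the growth condition ‖A(v)‖_{V*} ≤ C(1+‖v‖_V^{α-1})(1+‖v‖_H^β) for some α>1, β≥0, where V ⊆ H continuously. Then the two definitions of pseudo-monotonicity are equivalent: A satisfies Brézis's definition (vₙ⇀v and liminf⟨A(vₙ),vₙ-v⟩ ≥ 0 implies ⟨A(v),v-u⟩ ≥ limsup⟨A(vₙ),vₙ-u⟩ for all u) if and only if A satisfies Browder's definition (vₙ⇀v and liminf⟨A(vₙ),vₙ-v⟩ ≥ 0 implies A(vₙ)⇀A(v) and ⟨A(vₙ),vₙ⟩→⟨A(v),v⟩). -/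
open Filter NormedSpace Topology

/-!
For Browder ⇒ Brézis, `⟪A vₙ, vₙ - u⟫ = ⟪A vₙ, vₙ⟫ - ⟪A vₙ, u⟫` converges to `⟪A v, v - u⟫`.

For Brézis ⇒ Browder, a weakly convergent sequence is bounded (uniform boundedness), hence by
the growth condition so is `A vₙ`, and every `⟪A vₙ, vₙ - u⟫` is a bounded real sequence.
Brézis with `u = v` gives `⟪A vₙ, vₙ - v⟫ → 0`. Since `⟪A vₙ, w⟫ = ⟪A vₙ, vₙ - (v - w)⟫ - ⟪A vₙ, vₙ - v⟫`,
Brézis with `u = v - w` gives `limsup ⟪A vₙ, w⟫ ≤ ⟪A v, w⟫` for every `w`; applied to `-w` this is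
the matching bound on the limit inferior, hence `A vₙ ⇀ A v`. Finally
`⟪A vₙ, vₙ⟫ = ⟪A vₙ, vₙ - v⟫ + ⟪A vₙ, v⟫ → ⟪A v, v⟫`.
-/

theorem exists_norm_le_of_forall_tendsto_dual {𝕜 V : Type*} [RCLike 𝕜] [NormedAddCommGroup V]
    [NormedSpace 𝕜 V] {v : ℕ → V} {x : V}
    (h : ∀ f : StrongDual 𝕜 V, Tendsto (fun n => f (v n)) atTop (𝓝 (f x))) :
    ∃ M, ∀ n, ‖v n‖ ≤ M := by
  obtain ⟨M, hM⟩ := banach_steinhaus (g := fun n => inclusionInDoubleDual 𝕜 V (v n)) fun f => by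
    obtain ⟨c, hc⟩ := (h f).norm.bddAbove_range
    exact ⟨c, fun n => hc ⟨n, rfl⟩⟩
  exact ⟨M, fun n => (inclusionInDoubleDualLi 𝕜 (E := V)).norm_map (v n) ▸ hM n⟩

section

variable {V : Type*} [NormedAddCommGroup V] [NormedSpace ℝ V]

theorem exists_norm_le_of_growth {H : Type*} [SeminormedAddCommGroup H] [NormedSpace ℝ H]
    (e : V →L[ℝ] H) {A : V → StrongDual ℝ V} {α β C : ℝ} (hα : 1 ≤ α) (hβ : 0 ≤ β) (hC : 0 ≤ C)
    (hgrowth : ∀ v : V, ‖A v‖ ≤ C * (1 + ‖v‖ ^ (α - 1)) * (1 + ‖e v‖ ^ β)) (M : ℝ) :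
    ∃ K, ∀ v, ‖v‖ ≤ M → ‖A v‖ ≤ K := by
  refine ⟨C * (1 + M ^ (α - 1)) * (1 + (‖e‖ * M) ^ β), fun v hv => (hgrowth v).trans ?_⟩
  have hev : ‖e v‖ ≤ ‖e‖ * M := e.le_of_opNorm_le_of_le le_rfl hv
  have hα' : 0 ≤ α - 1 := sub_nonneg.2 hα
  have hM : 0 ≤ M := (norm_nonneg v).trans hv
  gcongr

variable {ι : Type*} {l : Filter ι} {φ : ι → StrongDual ℝ V} {ψ : StrongDual ℝ V}

theorem isBoundedUnder_abs_apply {w : ι → V} {K R : ℝ} (hφ : ∀ i, ‖φ i‖ ≤ K)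
    (hw : ∀ i, ‖w i‖ ≤ R) : IsBoundedUnder (· ≤ ·) l fun i => |φ i (w i)| :=
  isBoundedUnder_of ⟨K * R, fun i => (φ i).le_of_opNorm_le_of_le (hφ i) (hw i)⟩

theorem tendsto_apply_of_forall_eventually_lt
    (h : ∀ w b, ψ w < b → ∀ᶠ i in l, φ i w < b) (w : V) :
    Tendsto (fun i => φ i w) l (𝓝 (ψ w)) := by
  refine tendsto_order.2 ⟨fun a ha => ?_, h w⟩
  filter_upwards [h (-w) (-a) (by simpa using ha)] with i hi
  simpa using hi

variable {v : ι → V} {x : V}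

theorem eventually_apply_lt_of_limsup_apply_sub_le
    (hbdd : ∀ u, IsBoundedUnder (· ≤ ·) l fun i => φ i (v i - u))
    (hx : Tendsto (fun i => φ i (v i - x)) l (𝓝 0))
    (hB : ∀ u, limsup (fun i => φ i (v i - u)) l ≤ ψ (x - u)) {w : V} {b : ℝ} (hb : ψ w < b) :
    ∀ᶠ i in l, φ i w < b := by
  obtain ⟨c, hwc, hcb⟩ := exists_between hb
  have hfar : ∀ᶠ i in l, φ i (v i - (x - w)) < c :=
    eventually_lt_of_limsup_lt ((hB (x - w)).trans_lt (by simpa using hwc)) (hbdd _)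
  have hnear : ∀ᶠ i in l, c - b < φ i (v i - x) := hx.eventually (lt_mem_nhds (by linarith))
  filter_upwards [hfar, hnear] with i hfar hnear
  have hsplit : φ i w = φ i (v i - (x - w)) - φ i (v i - x) := by simp only [map_sub]; ring
  linarith

theorem tendsto_apply_of_limsup_apply_sub_le {K M : ℝ} (hφ : ∀ i, ‖φ i‖ ≤ K)
    (hv : ∀ i, ‖v i‖ ≤ M) (hlim : 0 ≤ liminf (fun i => φ i (v i - x)) l)
    (hB : ∀ u, limsup (fun i => φ i (v i - u)) l ≤ ψ (x - u)) :
    (∀ w, Tendsto (fun i => φ i w) l (𝓝 (ψ w))) ∧ Tendsto (fun i => φ i (v i)) l (𝓝 (ψ x)) := by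
  have hbdd (u : V) : IsBoundedUnder (· ≤ ·) l fun i => |φ i (v i - u)| :=
    isBoundedUnder_abs_apply hφ fun i => norm_sub_le_of_le (hv i) le_rfl
  have hx : Tendsto (fun i => φ i (v i - x)) l (𝓝 0) :=
    tendsto_of_le_liminf_of_limsup_le hlim (by simpa using hB x)
      (isBoundedUnder_le_abs.1 (hbdd x)).1 (isBoundedUnder_le_abs.1 (hbdd x)).2
  have hw := tendsto_apply_of_forall_eventually_lt fun w b hb =>
    eventually_apply_lt_of_limsup_apply_sub_le (fun u => (isBoundedUnder_le_abs.1 (hbdd u)).1)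
      hx hB hb
  refine ⟨hw, ?_⟩
  simpa using hx.add (hw x)

end

/-- Under the growth condition `‖A v‖_{V*} ≤ C (1 + ‖v‖_V^{α-1})(1 + ‖v‖_H^β)`
(the `H`-norm realized through a continuous embedding `e : V →L H` into a Hilbert
space), Brézis's and Browder's definitions of pseudo-monotonicity are equivalent.
Weak convergence in `V` is tested against all `f ∈ V*`, and weak convergence in
`V*` against elements of `V`. -/
theorem pseudomonotone_definitions_equivalent
    {V H : Type*} [NormedAddCommGroup V] [NormedSpace ℝ V]
    [NormedAddCommGroup H] [InnerProductSpace ℝ H]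
    (e : V →L[ℝ] H)
    (A : V → StrongDual ℝ V)
    (α β C : ℝ) (hα : 1 < α) (hβ : 0 ≤ β) (hC : 0 < C)
    (hgrowth : ∀ v : V, ‖A v‖ ≤ C * (1 + ‖v‖ ^ (α - 1)) * (1 + ‖e v‖ ^ β)) :
    ((∀ (v : ℕ → V) (x : V),
        (∀ f : StrongDual ℝ V,
            Tendsto (fun n => f (v n)) atTop (nhds (f x))) →
        0 ≤ liminf (fun n => A (v n) (v n - x)) atTop →
        ∀ u : V, limsup (fun n => A (v n) (v n - u)) atTop ≤ A x (x - u))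
      ↔
      (∀ (v : ℕ → V) (x : V),
        (∀ f : StrongDual ℝ V,
            Tendsto (fun n => f (v n)) atTop (nhds (f x))) →
        0 ≤ liminf (fun n => A (v n) (v n - x)) atTop →
        (∀ w : V, Tendsto (fun n => A (v n) w) atTop (nhds (A x w))) ∧
          Tendsto (fun n => A (v n) (v n)) atTop (nhds (A x x)))) := by
  constructor
  · intro hBrezis v x hweak hlim
    obtain ⟨M, hM⟩ := exists_norm_le_of_forall_tendsto_dual hweak
    obtain ⟨K, hK⟩ := exists_norm_le_of_growth e hα.le hβ hC.le hgrowth M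
    exact tendsto_apply_of_limsup_apply_sub_le (fun n => hK _ (hM n)) hM hlim
      (hBrezis v x hweak hlim)
  · intro hBrowder v x hweak hlim u
    obtain ⟨hw, hvv⟩ := hBrowder v x hweak hlim
    refine (Tendsto.limsup_eq ?_).le
    simpa only [map_sub] using hvv.sub (hw u)
end

section
/- Let v ∈ W₀^{4,2}([0,L]) and set V-norm ‖v‖_V = ‖v‖_{W^{4,2}} and H-norm ‖v‖_H = ‖v‖_{W^{2,2}}. Then ‖∂ₓ²((∂ₓv)²)‖_{L²} ≤ ‖v‖_{W^{2,4}}² + ‖v‖_{W^{1,∞}}‖v‖_{W^{3,2}} ≤ C‖v‖_V^{1/2}‖v‖_H^{3/2}. -/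
/-!
Write `a = v'`. Since `∂ₓ²(a²) = 2 (a')² + 2 a a''`, the `L²` triangle inequality gives
`‖∂ₓ²(a²)‖ ≤ 2 ‖(v'')²‖ + 2 ‖v'‖_∞ ‖v'''‖`, which is the first bound. For the second, every
derivative of `v` vanishes at `0` and `L`, so integration by parts and Cauchy–Schwarz give
`‖(v'')²‖ ≤ 3 ‖v'‖_∞ ‖v'''‖` (from `∫ (v'')⁴ = -3 ∫ v' (v'')² v'''`), `‖v'''‖² ≤ ‖v''‖ ‖v''''‖`,
and Agmon's inequality `‖v'‖_∞² ≤ 2 ‖v'‖ ‖v''‖`. Hence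
`‖∂ₓ²((v')²)‖ ≤ 8 ‖v'‖_∞ ‖v'''‖ ≤ 8 √2 ‖v‖_V^{1/2} ‖v‖_H^{3/2}`.
-/

open MeasureTheory Set

noncomputable section

/-- `L²(0,L)`-norm. -/
def L2n (L : ℝ) (f : ℝ → ℝ) : ℝ := Real.sqrt (∫ x in (0:ℝ)..L, f x ^ 2)

/-- `L^∞(0,L)`-norm. -/
def LinfN (L : ℝ) (f : ℝ → ℝ) : ℝ := sSup ((fun x => |f x|) '' Set.Icc 0 L)

/-- `W^{k,2}(0,L)`-norm. -/
def Wk2n (k : ℕ) (L : ℝ) (u : ℝ → ℝ) : ℝ :=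
  Real.sqrt (∫ x in (0:ℝ)..L, ∑ j ∈ Finset.range (k + 1), iteratedDeriv j u x ^ 2)

/-- `W^{2,4}(0,L)`-norm. -/
def W24n (L : ℝ) (u : ℝ → ℝ) : ℝ :=
  (∫ x in (0:ℝ)..L, ∑ j ∈ Finset.range 3, iteratedDeriv j u x ^ 4) ^ ((1:ℝ)/4)

/-- `W^{1,∞}(0,L)`-norm. -/
def W1infN (L : ℝ) (u : ℝ → ℝ) : ℝ := LinfN L u + LinfN L (deriv u)

theorem tsupport_iteratedDeriv_subset {𝕜 F : Type*} [NontriviallyNormedField 𝕜]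
    [NormedAddCommGroup F] [NormedSpace 𝕜 F] (f : 𝕜 → F) (k : ℕ) :
    tsupport (iteratedDeriv k f) ⊆ tsupport f := by
  induction k with
  | zero => rw [iteratedDeriv_zero]
  | succ k ih => exact (iteratedDeriv_succ (f := f) ▸ tsupport_deriv_subset).trans ih

theorem ContDiff.hasDerivAt_iteratedDeriv {𝕜 F : Type*} [NontriviallyNormedField 𝕜]
    [NormedAddCommGroup F] [NormedSpace 𝕜 F] {f : 𝕜 → F} {n : WithTop ℕ∞} (hf : ContDiff 𝕜 n f)
    {k : ℕ} (hk : k < n) (x : 𝕜) :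
    HasDerivAt (iteratedDeriv k f) (iteratedDeriv (k + 1) f x) x := by
  rw [iteratedDeriv_succ]
  exact (hf.differentiable_iteratedDeriv k hk x).hasDerivAt

theorem ContDiff.hasDerivAt_deriv_iteratedDeriv_two {𝕜 F : Type*} [NontriviallyNormedField 𝕜]
    [NormedAddCommGroup F] [NormedSpace 𝕜 F] {f : 𝕜 → F} {n : WithTop ℕ∞} (hf : ContDiff 𝕜 n f)
    (hn : 1 < n) (x : 𝕜) :
    HasDerivAt (deriv f) (iteratedDeriv 2 f x) x := by
  simpa only [iteratedDeriv_one] using hf.hasDerivAt_iteratedDeriv (k := 1) (mod_cast hn) x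

section L2

variable {L : ℝ} {f g w : ℝ → ℝ}

-- Cauchy–Schwarz for `∫₀ᴸ f g` is inherited from positive semidefinite bilinear forms.
def intervalL2Pairing (L : ℝ) : LinearMap.BilinForm ℝ C(ℝ, ℝ) :=
  LinearMap.mk₂ ℝ (fun f g => ∫ x in (0:ℝ)..L, f x * g x)
    (fun f₁ f₂ g => by
      simp only [ContinuousMap.add_apply, add_mul]
      exact intervalIntegral.integral_add ((f₁.continuous.mul g.continuous).intervalIntegrable _ _)
        ((f₂.continuous.mul g.continuous).intervalIntegrable _ _))
    (fun c f g => by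
      simp only [ContinuousMap.smul_apply, smul_eq_mul, mul_assoc]
      exact intervalIntegral.integral_const_mul c _)
    (fun f g₁ g₂ => by
      simp only [ContinuousMap.add_apply, mul_add]
      exact intervalIntegral.integral_add ((f.continuous.mul g₁.continuous).intervalIntegrable _ _)
        ((f.continuous.mul g₂.continuous).intervalIntegrable _ _))
    (fun c f g => by
      simp only [ContinuousMap.smul_apply, smul_eq_mul, mul_left_comm _ c]
      exact intervalIntegral.integral_const_mul c _)

theorem sq_intervalIntegral_mul_le (hL : 0 ≤ L) (hf : Continuous f) (hg : Continuous g) :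
    (∫ x in (0:ℝ)..L, f x * g x) ^ 2 ≤
      (∫ x in (0:ℝ)..L, f x ^ 2) * ∫ x in (0:ℝ)..L, g x ^ 2 := by
  have := (intervalL2Pairing L).apply_mul_apply_le_of_forall_zero_le
    (fun h => intervalIntegral.integral_nonneg hL fun x _ => mul_self_nonneg (h x)) ⟨f, hf⟩ ⟨g, hg⟩
  simpa [intervalL2Pairing, sq, mul_comm (g _)] using this

theorem L2n_nonneg : 0 ≤ L2n L f := Real.sqrt_nonneg _

theorem L2n_sq (hL : 0 ≤ L) : L2n L f ^ 2 = ∫ x in (0:ℝ)..L, f x ^ 2 :=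
  Real.sq_sqrt (intervalIntegral.integral_nonneg hL fun x _ => sq_nonneg (f x))

theorem L2n_abs : L2n L (fun x => |f x|) = L2n L f := by
  simp only [L2n, sq_abs]

theorem L2n_const_mul (c : ℝ) : L2n L (fun x => c * f x) = |c| * L2n L f := by
  simp only [L2n, mul_pow, intervalIntegral.integral_const_mul,
    Real.sqrt_mul (sq_nonneg c), Real.sqrt_sq_eq_abs]

theorem L2n_mono (hL : 0 ≤ L) (hf : Continuous f) (hg : Continuous g)
    (h : ∀ x ∈ Icc 0 L, |f x| ≤ |g x|) : L2n L f ≤ L2n L g :=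
  Real.sqrt_le_sqrt <| intervalIntegral.integral_mono_on hL
    ((hf.pow 2).intervalIntegrable _ _) ((hg.pow 2).intervalIntegrable _ _)
    fun x hx => sq_le_sq.2 (h x hx)

theorem L2n_mul_le (hL : 0 ≤ L) (hw : Continuous w) (hf : Continuous f) {M : ℝ}
    (hM : ∀ x ∈ Icc 0 L, |w x| ≤ M) : L2n L (fun x => w x * f x) ≤ M * L2n L f := by
  have hM0 : 0 ≤ M := (abs_nonneg _).trans (hM 0 ⟨le_rfl, hL⟩)
  calc L2n L (fun x => w x * f x) ≤ L2n L (fun x => M * f x) :=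
        L2n_mono hL (hw.mul hf) (continuous_const.mul hf) fun x hx => by
          rw [abs_mul, abs_mul, abs_of_nonneg hM0]
          exact mul_le_mul_of_nonneg_right (hM x hx) (abs_nonneg _)
    _ = M * L2n L f := by rw [L2n_const_mul, abs_of_nonneg hM0]

theorem abs_intervalIntegral_mul_le_L2n_mul_L2n (hL : 0 ≤ L) (hf : Continuous f)
    (hg : Continuous g) : |∫ x in (0:ℝ)..L, f x * g x| ≤ L2n L f * L2n L g := by
  rw [L2n, L2n, ← Real.sqrt_mul (intervalIntegral.integral_nonneg hL fun x _ => sq_nonneg _)]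
  exact Real.abs_le_sqrt (sq_intervalIntegral_mul_le hL hf hg)

theorem L2n_add_le (hL : 0 ≤ L) (hf : Continuous f) (hg : Continuous g) :
    L2n L (fun x => f x + g x) ≤ L2n L f + L2n L g := by
  have hexpand : ∫ x in (0:ℝ)..L, (f x + g x) ^ 2
      = (∫ x in (0:ℝ)..L, f x ^ 2) + 2 * (∫ x in (0:ℝ)..L, f x * g x)
        + ∫ x in (0:ℝ)..L, g x ^ 2 := by
    simp only [add_sq, mul_assoc]
    rw [intervalIntegral.integral_add, intervalIntegral.integral_add,
      intervalIntegral.integral_const_mul] <;>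
      exact Continuous.intervalIntegrable (by fun_prop) _ _
  have hcs := abs_intervalIntegral_mul_le_L2n_mul_L2n hL hf hg
  rw [L2n, Real.sqrt_le_left (add_nonneg L2n_nonneg L2n_nonneg), hexpand, ← L2n_sq hL,
    ← L2n_sq hL]
  nlinarith [le_abs_self (∫ x in (0:ℝ)..L, f x * g x)]

end L2

section Norms

variable {L M : ℝ} {f u : ℝ → ℝ}

theorem ContDiff.continuous_sum_iteratedDeriv_pow {k : ℕ} (hu : ContDiff ℝ k u) (p : ℕ) :
    Continuous fun x => ∑ i ∈ Finset.range (k + 1), iteratedDeriv i u x ^ p :=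
  continuous_finsetSum _ fun i hi =>
    (hu.continuous_iteratedDeriv i (mod_cast Nat.lt_succ_iff.1 (Finset.mem_range.1 hi))).pow p

theorem L2n_iteratedDeriv_le_Wk2n {k j : ℕ} (hu : ContDiff ℝ k u) (hj : j ≤ k) (hL : 0 ≤ L) :
    L2n L (iteratedDeriv j u) ≤ Wk2n k L u :=
  Real.sqrt_le_sqrt <| intervalIntegral.integral_mono_on hL
    (((hu.continuous_iteratedDeriv j (mod_cast hj)).pow 2).intervalIntegrable _ _)
    ((hu.continuous_sum_iteratedDeriv_pow 2).intervalIntegrable _ _)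
    fun x _ => Finset.single_le_sum (f := fun i => iteratedDeriv i u x ^ 2)
      (fun _ _ => sq_nonneg _) (Finset.mem_range.2 (Nat.lt_succ_of_le hj))

theorem L2n_sq_iteratedDeriv_le_W24n_sq {j : ℕ} (hu : ContDiff ℝ 2 u) (hj : j ≤ 2)
    (hL : 0 ≤ L) : L2n L (fun x => iteratedDeriv j u x ^ 2) ≤ W24n L u ^ 2 := by
  have hsum : 0 ≤ ∫ x in (0:ℝ)..L, ∑ i ∈ Finset.range 3, iteratedDeriv i u x ^ 4 :=
    intervalIntegral.integral_nonneg hL fun x _ => Finset.sum_nonneg fun i _ => by positivity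
  rw [W24n, ← Real.rpow_natCast, ← Real.rpow_mul hsum, L2n]
  norm_num only [← Real.sqrt_eq_rpow]
  refine Real.sqrt_le_sqrt <| intervalIntegral.integral_mono_on hL
    (((hu.continuous_iteratedDeriv j (mod_cast hj)).pow 2 |>.pow 2).intervalIntegrable _ _)
    ((hu.continuous_sum_iteratedDeriv_pow 4).intervalIntegrable _ _)
    fun x _ => ?_
  rw [← pow_mul]
  exact Finset.single_le_sum (f := fun i => iteratedDeriv i u x ^ 4)
      (fun _ _ => by positivity) (Finset.mem_range.2 (Nat.lt_succ_of_le hj))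

theorem abs_le_LinfN (hf : ContinuousOn f (Icc 0 L)) {x : ℝ} (hx : x ∈ Icc 0 L) :
    |f x| ≤ LinfN L f :=
  le_csSup (isCompact_Icc.image_of_continuousOn hf.abs).bddAbove ⟨x, hx, rfl⟩

theorem LinfN_le (hL : 0 ≤ L) (h : ∀ x ∈ Icc 0 L, |f x| ≤ M) : LinfN L f ≤ M :=
  csSup_le ((nonempty_Icc.2 hL).image _) (forall_mem_image.2 h)

theorem LinfN_nonneg : 0 ≤ LinfN L f :=
  Real.sSup_nonneg (forall_mem_image.2 fun x _ => abs_nonneg (f x))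

theorem LinfN_deriv_le_W1infN : LinfN L (deriv u) ≤ W1infN L u :=
  le_add_of_nonneg_left LinfN_nonneg

end Norms

section Interpolation

variable {L M : ℝ} {u u' u'' w w' : ℝ → ℝ}

theorem intervalIntegral_mul_deriv_eq_neg_of_eq_zero (hu : ∀ x, HasDerivAt u (u' x) x)
    (hw : ∀ x, HasDerivAt w (w' x) x) (hu' : Continuous u') (hw' : Continuous w')
    (h0 : u 0 = 0) (hL : u L = 0) :
    ∫ x in (0:ℝ)..L, u x * w' x = -∫ x in (0:ℝ)..L, u' x * w x := by
  rw [intervalIntegral.integral_mul_deriv_eq_deriv_mul (fun x _ => hu x) (fun x _ => hw x)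
    (hu'.intervalIntegrable _ _) (hw'.intervalIntegrable _ _), h0, hL]
  ring

theorem intervalIntegral_deriv_sq_le (hL : 0 ≤ L) (hu : ∀ x, HasDerivAt u (u' x) x)
    (hu' : ∀ x, HasDerivAt u' (u'' x) x) (hu'' : Continuous u'') (h0 : u 0 = 0) (hL0 : u L = 0) :
    ∫ x in (0:ℝ)..L, u' x ^ 2 ≤ L2n L u * L2n L u'' := by
  have hcu' : Continuous u' := continuous_iff_continuousAt.2 fun x => (hu' x).continuousAt
  have hcu : Continuous u := continuous_iff_continuousAt.2 fun x => (hu x).continuousAt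
  have hparts := intervalIntegral_mul_deriv_eq_neg_of_eq_zero hu hu' hcu' hu'' h0 hL0
  simp only [← sq] at hparts
  calc ∫ x in (0:ℝ)..L, u' x ^ 2 = -∫ x in (0:ℝ)..L, u x * u'' x := by rw [hparts, neg_neg]
    _ ≤ |∫ x in (0:ℝ)..L, u x * u'' x| := neg_le_abs _
    _ ≤ L2n L u * L2n L u'' := abs_intervalIntegral_mul_le_L2n_mul_L2n hL hcu hu''

theorem sq_le_two_mul_L2n_mul_L2n (hu : ∀ x, HasDerivAt u (u' x) x) (hu' : Continuous u')
    (h0 : u 0 = 0) {x : ℝ} (hx : x ∈ Icc 0 L) : u x ^ 2 ≤ 2 * (L2n L u * L2n L u') := by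
  have hcu : Continuous u := continuous_iff_continuousAt.2 fun x => (hu x).continuousAt
  have hL : 0 ≤ L := hx.1.trans hx.2
  have hftc : ∫ y in (0:ℝ)..x, 2 * (u y * u' y) = u x ^ 2 := by
    rw [intervalIntegral.integral_eq_sub_of_hasDerivAt (f := fun y => u y ^ 2)
      (f' := fun y => 2 * (u y * u' y)) (fun y _ => by simpa [mul_assoc] using (hu y).fun_pow 2)
      ((continuous_const.mul (hcu.mul hu')).intervalIntegrable _ _), h0]
    ring
  calc u x ^ 2 = ∫ y in (0:ℝ)..x, 2 * (u y * u' y) := hftc.symm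
    _ ≤ ∫ y in (0:ℝ)..x, 2 * (|u y| * |u' y|) :=
      intervalIntegral.integral_mono_on hx.1
        ((continuous_const.mul (hcu.mul hu')).intervalIntegrable _ _)
        ((continuous_const.mul (hcu.abs.mul hu'.abs)).intervalIntegrable _ _) fun y _ => by
          rw [← abs_mul]
          gcongr
          exact le_abs_self _
    _ ≤ ∫ y in (0:ℝ)..L, 2 * (|u y| * |u' y|) :=
      intervalIntegral.integral_mono_interval le_rfl hx.1 hx.2
        (Filter.Eventually.of_forall fun y => by positivity)
        ((continuous_const.mul (hcu.abs.mul hu'.abs)).intervalIntegrable _ _)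
    _ ≤ 2 * (L2n L u * L2n L u') := by
      rw [intervalIntegral.integral_const_mul, ← L2n_abs (f := u), ← L2n_abs (f := u')]
      gcongr
      exact (le_abs_self _).trans (abs_intervalIntegral_mul_le_L2n_mul_L2n hL hcu.abs hu'.abs)

theorem LinfN_sq_le (hL : 0 ≤ L) (hu : ∀ x, HasDerivAt u (u' x) x) (hu' : Continuous u')
    (h0 : u 0 = 0) : LinfN L u ^ 2 ≤ 2 * (L2n L u * L2n L u') := by
  rw [← Real.le_sqrt LinfN_nonneg (mul_nonneg zero_le_two (mul_nonneg L2n_nonneg L2n_nonneg))]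
  exact LinfN_le hL fun x hx => Real.abs_le_sqrt (sq_le_two_mul_L2n_mul_L2n hu hu' h0 hx)

theorem L2n_sq_deriv_le (hL : 0 ≤ L) (hu : ∀ x, HasDerivAt u (u' x) x)
    (hu' : ∀ x, HasDerivAt u' (u'' x) x) (hu'' : Continuous u'') (h0 : u 0 = 0) (hL0 : u L = 0)
    (hM : ∀ x ∈ Icc 0 L, |u x| ≤ M) : L2n L (fun x => u' x ^ 2) ≤ 3 * M * L2n L u'' := by
  have hcu' : Continuous u' := continuous_iff_continuousAt.2 fun x => (hu' x).continuousAt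
  have hcu : Continuous u := continuous_iff_continuousAt.2 fun x => (hu x).continuousAt
  have hM0 : 0 ≤ M := (abs_nonneg _).trans (hM 0 ⟨le_rfl, hL⟩)
  have hparts : ∫ x in (0:ℝ)..L, u' x ^ 2 * (-3 * u x * u'' x) =
      ∫ x in (0:ℝ)..L, (u' x ^ 2) ^ 2 := by
    have h := intervalIntegral_mul_deriv_eq_neg_of_eq_zero hu (w := fun x => u' x ^ 3)
      (w' := fun x => 3 * u' x ^ 2 * u'' x) (fun x => by simpa using (hu' x).fun_pow 3) hcu'
      (by fun_prop) h0 hL0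
    rw [intervalIntegral.integral_congr (g := fun x => -(u x * (3 * u' x ^ 2 * u'' x)))
      fun x _ => by ring, intervalIntegral.integral_neg, h, neg_neg]
    exact intervalIntegral.integral_congr fun x _ => by ring
  have hsq : L2n L (fun x => u' x ^ 2) ^ 2 ≤ L2n L (fun x => u' x ^ 2) * (3 * M * L2n L u'') :=
    calc L2n L (fun x => u' x ^ 2) ^ 2 = ∫ x in (0:ℝ)..L, u' x ^ 2 * (-3 * u x * u'' x) := by
          rw [L2n_sq hL, hparts]
      _ ≤ L2n L (fun x => u' x ^ 2) * L2n L (fun x => -3 * u x * u'' x) :=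
          (le_abs_self _).trans (abs_intervalIntegral_mul_le_L2n_mul_L2n hL (by fun_prop)
            (by fun_prop))
      _ ≤ L2n L (fun x => u' x ^ 2) * (3 * M * L2n L u'') := by
          gcongr
          · exact L2n_nonneg
          refine L2n_mul_le hL (by fun_prop) hu'' fun x hx => ?_
          rw [abs_mul, abs_neg, abs_of_pos three_pos]
          exact mul_le_mul_of_nonneg_left (hM x hx) zero_le_three
  have hX : 0 ≤ 3 * M * L2n L u'' := by have := L2n_nonneg (L := L) (f := u''); positivity
  nlinarith [L2n_nonneg (L := L) (f := fun x => u' x ^ 2)]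

end Interpolation

section SurfaceGrowth

variable {L : ℝ} {v : ℝ → ℝ}

theorem iteratedDeriv_two_deriv_sq (hv : ContDiff ℝ 3 v) :
    iteratedDeriv 2 (fun y => deriv v y ^ 2) =
      fun x => 2 * iteratedDeriv 2 v x ^ 2 + 2 * deriv v x * iteratedDeriv 3 v x := by
  have hv' := hv.hasDerivAt_deriv_iteratedDeriv_two (by norm_num)
  have hderiv : deriv (fun y => deriv v y ^ 2) = fun x => 2 * deriv v x * iteratedDeriv 2 v x :=
    funext fun x => by simpa using ((hv' x).fun_pow 2).deriv
  rw [iteratedDeriv_succ, iteratedDeriv_one, hderiv]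
  funext x
  have hv'' := hv.hasDerivAt_iteratedDeriv (k := 2) (by norm_num) x
  exact ((((hv' x).const_mul 2).mul hv'').congr_deriv (by ring)).deriv

theorem L2n_iteratedDeriv_two_deriv_sq_le (hv : ContDiff ℝ 3 v) (hL : 0 ≤ L) :
    L2n L (iteratedDeriv 2 (fun y => deriv v y ^ 2)) ≤
      2 * L2n L (fun x => iteratedDeriv 2 v x ^ 2) +
        2 * (LinfN L (deriv v) * L2n L (iteratedDeriv 3 v)) := by
  have hc1 : Continuous (deriv v) := by
    simpa only [iteratedDeriv_one] using hv.continuous_iteratedDeriv 1 (by norm_num)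
  have hc2 : Continuous (iteratedDeriv 2 v) := hv.continuous_iteratedDeriv 2 (by norm_num)
  have hc3 : Continuous (iteratedDeriv 3 v) := hv.continuous_iteratedDeriv 3 le_rfl
  rw [iteratedDeriv_two_deriv_sq hv]
  simp only [mul_assoc]
  calc _ ≤ L2n L (fun x => 2 * iteratedDeriv 2 v x ^ 2) +
        L2n L (fun x => 2 * (deriv v x * iteratedDeriv 3 v x)) :=
        L2n_add_le hL (by fun_prop) (by fun_prop)
    _ ≤ _ := by
      rw [L2n_const_mul, L2n_const_mul, abs_two]
      gcongr
      exact L2n_mul_le hL hc1 hc3 fun x hx => abs_le_LinfN hc1.continuousOn hx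

theorem iteratedDeriv_eq_zero_of_tsupport_subset_Ioo (hsupp : tsupport v ⊆ Ioo 0 L) (k : ℕ) :
    iteratedDeriv k v 0 = 0 ∧ iteratedDeriv k v L = 0 :=
  ⟨image_eq_zero_of_notMem_tsupport fun h => (hsupp (tsupport_iteratedDeriv_subset v k h)).1.false,
    image_eq_zero_of_notMem_tsupport fun h => (hsupp (tsupport_iteratedDeriv_subset v k h)).2.false⟩

theorem deriv_eq_zero_of_tsupport_subset_Ioo (hsupp : tsupport v ⊆ Ioo 0 L) :
    deriv v 0 = 0 ∧ deriv v L = 0 := by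
  simpa only [iteratedDeriv_one] using iteratedDeriv_eq_zero_of_tsupport_subset_Ioo hsupp 1

theorem LinfN_deriv_sq_le_Wk2n_sq (hv : ContDiff ℝ 2 v) (hL : 0 ≤ L)
    (hsupp : tsupport v ⊆ Ioo 0 L) : LinfN L (deriv v) ^ 2 ≤ 2 * Wk2n 2 L v ^ 2 := by
  have h1 : L2n L (deriv v) ≤ Wk2n 2 L v := by
    simpa only [iteratedDeriv_one] using L2n_iteratedDeriv_le_Wk2n hv one_le_two hL
  have h2 := L2n_iteratedDeriv_le_Wk2n hv le_rfl hL
  refine (LinfN_sq_le hL (hv.hasDerivAt_deriv_iteratedDeriv_two (by norm_num))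
    (hv.continuous_iteratedDeriv' 2) (deriv_eq_zero_of_tsupport_subset_Ioo hsupp).1).trans ?_
  nlinarith [L2n_nonneg (L := L) (f := deriv v), L2n_nonneg (L := L) (f := iteratedDeriv 2 v)]

theorem L2n_iteratedDeriv_three_sq_le (hv : ContDiff ℝ 4 v) (hL : 0 ≤ L)
    (hsupp : tsupport v ⊆ Ioo 0 L) :
    L2n L (iteratedDeriv 3 v) ^ 2 ≤ Wk2n 2 L v * Wk2n 4 L v := by
  have hvanish := iteratedDeriv_eq_zero_of_tsupport_subset_Ioo hsupp 2
  rw [L2n_sq hL]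
  exact (intervalIntegral_deriv_sq_le hL (hv.hasDerivAt_iteratedDeriv (by norm_num))
    (hv.hasDerivAt_iteratedDeriv (by norm_num)) (hv.continuous_iteratedDeriv' 4)
    hvanish.1 hvanish.2).trans <| mul_le_mul
      (L2n_iteratedDeriv_le_Wk2n (hv.of_le (by norm_num)) le_rfl hL)
      (L2n_iteratedDeriv_le_Wk2n hv le_rfl hL) L2n_nonneg (Real.sqrt_nonneg _)

theorem L2n_sq_iteratedDeriv_two_le (hv : ContDiff ℝ 3 v) (hL : 0 ≤ L)
    (hsupp : tsupport v ⊆ Ioo 0 L) :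
    L2n L (fun x => iteratedDeriv 2 v x ^ 2) ≤
      3 * LinfN L (deriv v) * L2n L (iteratedDeriv 3 v) :=
  L2n_sq_deriv_le hL (hv.hasDerivAt_deriv_iteratedDeriv_two (by norm_num))
    (hv.hasDerivAt_iteratedDeriv (by norm_num)) (hv.continuous_iteratedDeriv' 3)
    (deriv_eq_zero_of_tsupport_subset_Ioo hsupp).1 (deriv_eq_zero_of_tsupport_subset_Ioo hsupp).2
    fun x hx => abs_le_LinfN (hv.continuous_deriv (by norm_num)).continuousOn hx

end SurfaceGrowth

/-- Growth estimate (H4) with `α = 2`, `β = 1` for the surface growth model: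
`‖∂ₓ²((∂ₓv)²)‖_{L²} ≤ C(‖v‖_{W^{2,4}}² + ‖v‖_{W^{1,∞}}‖v‖_{W^{3,2}}) ≤
C‖v‖_{W^{4,2}}^{1/2}‖v‖_{W^{2,2}}^{3/2}`, with `‖·‖_V = ‖·‖_{W^{4,2}}` and
`‖·‖_H = ‖·‖_{W^{2,2}}`. -/
theorem surface_growth_growth_condition :
    ∃ C > (0:ℝ), ∀ L > (0:ℝ), ∀ v : ℝ → ℝ,
      ContDiff ℝ 4 v → tsupport v ⊆ Set.Ioo 0 L →
      L2n L (iteratedDeriv 2 (fun y => deriv v y ^ 2)) ≤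
          C * (W24n L v ^ 2 + W1infN L v * Wk2n 3 L v) ∧
        L2n L (iteratedDeriv 2 (fun y => deriv v y ^ 2)) ≤
          C * Wk2n 4 L v ^ ((1:ℝ)/2) * Wk2n 2 L v ^ ((3:ℝ)/2) := by
  -- `12 ≥ 8 √2`, the constant of the second bound
  refine ⟨12, by norm_num, fun L hL v hv hsupp => ?_⟩
  have hmain := L2n_iteratedDeriv_two_deriv_sq_le (hv.of_le (by norm_num)) hL.le
  have hS0 := LinfN_nonneg (L := L) (f := deriv v)
  have hD0 := L2n_nonneg (L := L) (f := iteratedDeriv 3 v)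
  refine ⟨hmain.trans ?_, hmain.trans ?_⟩
  · have hW24 := L2n_sq_iteratedDeriv_le_W24n_sq (hv.of_le (by norm_num)) le_rfl hL.le
    have hW1inf := LinfN_deriv_le_W1infN (L := L) (u := v)
    have hW32 := L2n_iteratedDeriv_le_Wk2n (hv.of_le (by norm_num)) (le_refl 3) hL.le
    nlinarith
  · have hP := L2n_sq_iteratedDeriv_two_le (hv.of_le (by norm_num)) hL.le hsupp
    have hS := LinfN_deriv_sq_le_Wk2n_sq (hv.of_le (by norm_num)) hL.le hsupp
    have hD := L2n_iteratedDeriv_three_sq_le hv hL.le hsupp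
    have hH : 0 ≤ Wk2n 2 L v := Real.sqrt_nonneg _
    have hV : 0 ≤ Wk2n 4 L v := Real.sqrt_nonneg _
    set Y := Wk2n 4 L v ^ ((1:ℝ)/2) * Wk2n 2 L v ^ ((3:ℝ)/2)
    have hY : Y ^ 2 = Wk2n 4 L v * Wk2n 2 L v ^ 3 := by
      rw [mul_pow, ← Real.rpow_mul_natCast hV, ← Real.rpow_mul_natCast hH]
      norm_num
    have hX : (LinfN L (deriv v) * L2n L (iteratedDeriv 3 v)) ^ 2 ≤ 2 * Y ^ 2 := by
      rw [hY, mul_pow]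
      nlinarith [mul_le_mul hS hD (sq_nonneg _) (by positivity)]
    have hY0 : 0 ≤ Y := by positivity
    rw [mul_assoc]
    nlinarith [mul_nonneg hS0 hD0]

end
end

section
/- For p ≥ 2 and matrices E, F ∈ ℝ^{d×d} (Frobenius norm and inner product), with τ(E) = 2(1+|E|)^{p-2}E, there exists C = C(p) > 0 such that (τ(E) - τ(F)):(E - F) ≥ C(|E-F|² + |E-F|^p). -/
noncomputable section

/-- Frobenius norm of a matrix. -/
def fnorm {d : ℕ} (E : Matrix (Fin d) (Fin d) ℝ) : ℝ :=
  Real.sqrt (∑ i, ∑ j, E i j ^ 2)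

/-- Frobenius inner product `A : B = Σᵢⱼ Aᵢⱼ Bᵢⱼ`. -/
def finner {d : ℕ} (A B : Matrix (Fin d) (Fin d) ℝ) : ℝ :=
  ∑ i, ∑ j, A i j * B i j

/-- Power-law stress tensor `τ(E) = 2(1+|E|)^{p-2} E` (viscosity `ν = 1`). -/
def tau {d : ℕ} (p : ℝ) (E : Matrix (Fin d) (Fin d) ℝ) : Matrix (Fin d) (Fin d) ℝ :=
  (2 * (1 + fnorm E) ^ (p - 2)) • E

lemma fnorm_nonneg {d : ℕ} (E : Matrix (Fin d) (Fin d) ℝ) : 0 ≤ fnorm E :=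
  Real.sqrt_nonneg _

lemma fnorm_sq {d : ℕ} (E : Matrix (Fin d) (Fin d) ℝ) :
    fnorm E ^ 2 = finner E E := by
  rw [fnorm, Real.sq_sqrt (by positivity)]
  simp [finner, sq]

lemma finner_expand {d : ℕ} (c₁ c₂ : ℝ) (E F : Matrix (Fin d) (Fin d) ℝ) :
    finner (c₁ • E - c₂ • F) (E - F)
      = c₁ * finner E E - (c₁ + c₂) * finner E F + c₂ * finner F F := by
  simp only [finner, Finset.mul_sum, ← Finset.sum_sub_distrib, ← Finset.sum_add_distrib]
  refine Finset.sum_congr rfl fun i _ => Finset.sum_congr rfl fun j _ => ?_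
  simp only [Matrix.sub_apply, Matrix.smul_apply, smul_eq_mul]
  ring

/-- Cauchy–Schwarz for the Frobenius inner product (squared form). -/
lemma finner_sq_le {d : ℕ} (E F : Matrix (Fin d) (Fin d) ℝ) :
    finner E F ^ 2 ≤ finner E E * finner F F := by
  have h := Finset.sum_mul_sq_le_sq_mul_sq (Finset.univ : Finset (Fin d × Fin d))
    (fun x => E x.1 x.2) (fun x => F x.1 x.2)
  simpa [finner, Fintype.sum_prod_type, pow_two] using h

set_option maxHeartbeats 1000000 in
/-- Strong monotonicity of the power-law stress tensor for `p ≥ 2`: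
`(τ(E) - τ(F)) : (E - F) ≥ C(|E-F|² + |E-F|^p)` for some `C = C(p) > 0`. -/
theorem power_law_strong_monotonicity (d : ℕ) (p : ℝ) (hp : 2 ≤ p) :
    ∃ C > (0:ℝ), ∀ E F : Matrix (Fin d) (Fin d) ℝ,
      C * (fnorm (E - F) ^ 2 + fnorm (E - F) ^ p) ≤ finner (tau p E - tau p F) (E - F) := by
  refine ⟨(2:ℝ) ^ (1 - p), Real.rpow_pos_of_pos two_pos _, fun E F => ?_⟩
  set a := fnorm E with ha
  set b := fnorm F with hb
  set dd := fnorm (E - F) with hdd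
  have ha0 : 0 ≤ a := fnorm_nonneg E
  have hb0 : 0 ≤ b := fnorm_nonneg F
  have hdd0 : 0 ≤ dd := fnorm_nonneg (E - F)
  set c := p - 2 with hc
  have hc0 : 0 ≤ c := by rw [hc]; linarith
  set φa := 2 * (1 + a) ^ c with hφa
  set φb := 2 * (1 + b) ^ c with hφb
  have h1a : (1:ℝ) ≤ (1 + a) ^ c := by
    have h := Real.rpow_le_rpow zero_le_one (by linarith : (1:ℝ) ≤ 1 + a) hc0
    rwa [Real.one_rpow] at h
  have h1b : (1:ℝ) ≤ (1 + b) ^ c := by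
    have h := Real.rpow_le_rpow zero_le_one (by linarith : (1:ℝ) ≤ 1 + b) hc0
    rwa [Real.one_rpow] at h
  have hφa1 : 2 ≤ φa := by rw [hφa]; linarith
  have hφb1 : 2 ≤ φb := by rw [hφb]; linarith
  -- inner products
  set A := finner E E with hA
  set B := finner F F with hB
  set X := finner E F with hX
  have hAa : A = a ^ 2 := (fnorm_sq E).symm
  have hBb : B = b ^ 2 := (fnorm_sq F).symm
  have hXab : X ^ 2 ≤ a ^ 2 * b ^ 2 := by
    have hcs := finner_sq_le E F
    rw [← hA, ← hB, ← hX] at hcs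
    calc X ^ 2 ≤ A * B := hcs
    _ = a ^ 2 * b ^ 2 := by rw [hAa, hBb]
  have hDsq : dd ^ 2 = A - 2 * X + B := by
    have h2 := finner_expand (d := d) 1 1 E F
    rw [one_smul, one_smul, ← hA, ← hB, ← hX] at h2
    rw [hdd, fnorm_sq, h2]
    ring
  -- the quantity S
  have hτ : tau p E - tau p F = φa • E - φb • F := by
    rw [tau, tau, ← ha, ← hb, ← hc, ← hφa, ← hφb]
  have hS : finner (tau p E - tau p F) (E - F) = φa * A - (φa + φb) * X + φb * B := by
    rw [hτ]
    have h2 := finner_expand (d := d) φa φb E F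
    rw [← hA, ← hB, ← hX] at h2
    exact h2
  set S := finner (tau p E - tau p F) (E - F) with hSdef
  clear_value a b dd c φa φb A B X S
  clear hτ hSdef hdd ha hb hA hB hX E F
  -- monotone cross term is nonnegative
  have hmono : 0 ≤ (φa - φb) * (A - B) := by
    rcases le_total a b with h | h
    · have h1 : φa ≤ φb := by
        rw [hφa, hφb]
        have := Real.rpow_le_rpow (by linarith : (0:ℝ) ≤ 1 + a)
          (by linarith : (1:ℝ) + a ≤ 1 + b) hc0
        linarith
      have h2 : A ≤ B := by rw [hAa, hBb]; exact pow_le_pow_left₀ ha0 h 2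
      have h3 := mul_nonneg (show (0:ℝ) ≤ φb - φa by linarith)
        (show (0:ℝ) ≤ B - A by linarith)
      nlinarith [h3]
    · have h1 : φb ≤ φa := by
        rw [hφa, hφb]
        have := Real.rpow_le_rpow (by linarith : (0:ℝ) ≤ 1 + b)
          (by linarith : (1:ℝ) + b ≤ 1 + a) hc0
        linarith
      have h2 : B ≤ A := by rw [hAa, hBb]; exact pow_le_pow_left₀ hb0 h 2
      exact mul_nonneg (by linarith) (by linarith)
  have hsplit : (φa + φb) * dd ^ 2 = φa * dd ^ 2 + φb * dd ^ 2 := by ring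
  have hkey : (φa + φb) * dd ^ 2 ≤ 2 * S := by
    have hid : 2 * S = (φa + φb) * dd ^ 2 + (φa - φb) * (A - B) := by
      rw [hS, hDsq]; ring
    linarith
  -- first bound : S ≥ 2 dd²
  have hbound1 : 2 * dd ^ 2 ≤ S := by
    have h2 : 4 * dd ^ 2 ≤ (φa + φb) * dd ^ 2 := by
      have := mul_le_mul_of_nonneg_right (show (4:ℝ) ≤ φa + φb by linarith) (sq_nonneg dd)
      linarith
    linarith
  rcases eq_or_lt_of_le hdd0 with h0 | hddpos
  · -- dd = 0
    have hS0 : (0:ℝ) ≤ S := by nlinarith [sq_nonneg dd]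
    rw [← h0, Real.zero_rpow (by linarith : p ≠ 0)]
    simpa using hS0
  · -- dd > 0 : second bound S ≥ 2^{2-p} dd^p
    have hpow : dd ^ c * dd ^ 2 = dd ^ p := by
      rw [← Real.rpow_natCast dd 2, ← Real.rpow_add hddpos]
      norm_num [hc]
    have h2c : (2:ℝ) ^ (2 - p) = ((2:ℝ) ^ c)⁻¹ := by
      rw [show (2:ℝ) - p = -c from by rw [hc]; ring, Real.rpow_neg (by norm_num)]
    have hhalf : (dd / 2) ^ c * dd ^ 2 = (2:ℝ) ^ (2 - p) * dd ^ p := by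
      rw [Real.div_rpow hdd0 (by norm_num : (0:ℝ) ≤ 2), h2c, div_mul_eq_mul_div, hpow,
        div_eq_inv_mul]
    have hbound2 : (2:ℝ) ^ (2 - p) * dd ^ p ≤ S := by
      rw [← hhalf]
      have hmax : dd ≤ 2 * (1 + a) ∨ dd ≤ 2 * (1 + b) := by
        have htri : dd ≤ a + b := by
          have hXlow : -(a * b) ≤ X := by nlinarith [hXab, mul_nonneg ha0 hb0]
          have hd2 : dd ^ 2 ≤ (a + b) ^ 2 := by nlinarith [hXlow, hDsq]
          nlinarith [hd2, mul_nonneg ha0 hb0]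
        rcases le_total a b with h | h
        · right; linarith
        · left; linarith
      rcases hmax with h | h
      · have h1 : (dd / 2) ^ c ≤ (1 + a) ^ c :=
          Real.rpow_le_rpow (by positivity) (by linarith) hc0
        have h2 : 2 * (dd / 2) ^ c * dd ^ 2 ≤ φa * dd ^ 2 :=
          mul_le_mul_of_nonneg_right (by rw [hφa]; linarith) (sq_nonneg dd)
        have h3 : (0:ℝ) ≤ φb * dd ^ 2 := mul_nonneg (by linarith) (sq_nonneg dd)
        linarith
      · have h1 : (dd / 2) ^ c ≤ (1 + b) ^ c :=
          Real.rpow_le_rpow (by linarith : (0:ℝ) ≤ dd / 2) (by linarith : dd / 2 ≤ 1 + b) hc0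
        have h2 : 2 * (dd / 2) ^ c * dd ^ 2 ≤ φb * dd ^ 2 :=
          mul_le_mul_of_nonneg_right (by rw [hφb]; linarith) (sq_nonneg dd)
        have h3 : (0:ℝ) ≤ φa * dd ^ 2 := mul_nonneg (by linarith) (sq_nonneg dd)
        linarith
    -- combine
    have hC2 : (2:ℝ) ^ (2 - p) = (2:ℝ) ^ (1 - p) * 2 := by
      rw [show (2:ℝ) - p = (1 - p) + 1 from by ring, Real.rpow_add two_pos, Real.rpow_one]
    have hC1 : (2:ℝ) ^ (1 - p) ≤ 1 :=
      Real.rpow_le_one_of_one_le_of_nonpos one_le_two (by linarith)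
    have e1 : (2:ℝ) ^ (1 - p) * (dd ^ 2 + dd ^ p)
        = (2:ℝ) ^ (1 - p) * dd ^ 2 + (2:ℝ) ^ (1 - p) * dd ^ p := by ring
    have e2 : (2:ℝ) ^ (1 - p) * dd ^ 2 ≤ dd ^ 2 := by
      have := mul_le_mul_of_nonneg_right hC1 (sq_nonneg dd)
      linarith
    have e3 : (2:ℝ) ^ (1 - p) * dd ^ p = ((2:ℝ) ^ (2 - p) * dd ^ p) / 2 := by
      rw [hC2]; ring
    rw [e1, e3]
    linarith
end
end
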